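/- Let d ≥ 2 and s(d)=d(d+1)/2. For any interval [a,b] ⊆ [1/2,1] with b−a ≤ 1/(2d), letting μ_{[a,b]} be the pushforward of Lebesgue measure on [a,b] under t ↦ (t,…,t^d) and D_N = {ξ ∈ ℤ^d : |ξ_i| ≤ s(d)N^i}, we have ∑_{ξ ∈ D_N} |μ̂_{[a,b]}(ξ)|² ≤ C N^{s(d)-d}, with C depending only on d. -/

import Mathlib

/-!
Substituting `u = t ^ d` turns the functions `t ↦ √(d t^(d-1)) e(n t^d)`, `n ∈ ℤ`, into the
exponentials `e(n u)` on an interval of length one, so they are orthonormal on `(a, a']` when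
`a'^d = a^d + 1`; for `[a, b] ⊆ [1/2, 1]` this interval contains `[a, b]` and is at most one long.
With `ξ₁, …, ξ_{d-1}` frozen, `μ̂(ξ)` is the inner product of the `ξ_d`-th member of the family with
the function `e(-(ξ₁t + ⋯ + ξ_{d-1}t^(d-1))) / √(d t^(d-1))` on `[a, b]`, which is bounded by
`2^((d-1)/2)`, so Bessel's inequality bounds the sum over `ξ_d` by `2^(d-1)`. There are
`∏_{i<d} (2 s(d) N^i + 1) ≤ (2 s(d) + 1)^(d-1) N^(s(d)-d)` choices of `ξ₁, …, ξ_{d-1}`.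
-/

open MeasureTheory intervalIntegral

noncomputable def e (x : ℝ) : ℂ := Complex.exp (2 * Real.pi * Complex.I * x)

open Finset
open scoped ComplexConjugate

lemma e_eq_fourierChar (x : ℝ) : e x = Real.fourierChar x := by
  rw [Real.fourierChar_apply, e]
  push_cast
  ring_nf

@[fun_prop]
lemma continuous_e : Continuous e := by
  simp only [funext e_eq_fourierChar]
  fun_prop

lemma norm_e (x : ℝ) : ‖e x‖ = 1 := by simp [e_eq_fourierChar, Circle.norm_coe]

lemma e_add (x y : ℝ) : e (x + y) = e x * e y := by
  simp [e_eq_fourierChar, AddChar.map_add_eq_mul]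

lemma conj_e (x : ℝ) : conj (e x) = e (-x) := by
  simp [e_eq_fourierChar, AddChar.map_neg_eq_inv]

lemma integral_e_intCast_mul_period (k : ℤ) (c : ℝ) :
    ∫ u in c..c + 1, e (k * u) = if k = 0 then 1 else 0 := by
  split_ifs with hk
  · simp [hk, e]
  have hk' : 2 * Real.pi * Complex.I * k ≠ 0 := by simp [Real.pi_ne_zero, hk]
  have he : ∀ u : ℝ, e (k * u) = Complex.exp (2 * Real.pi * Complex.I * k * u) := fun u => by
    rw [e]
    push_cast
    ring_nf
  simp only [he, integral_exp_mul_complex hk', div_eq_zero_iff, sub_eq_zero]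
  left
  push_cast
  rw [mul_add, Complex.exp_add, mul_one, mul_comm _ (k : ℂ), Complex.exp_int_mul_two_pi_mul_I,
    mul_one]

lemma integral_deriv_pow_mul_e_eq_ite {d : ℕ} (k : ℤ) {a a' : ℝ} (h : a' ^ d = a ^ d + 1) :
    ∫ t in a..a', ((d * t ^ (d - 1) : ℝ) : ℂ) * e (k * t ^ d) = if k = 0 then 1 else 0 := by
  have hderiv : ∀ t ∈ Set.uIcc a a', HasDerivAt (· ^ d) (d * t ^ (d - 1)) t :=
    fun t _ => hasDerivAt_pow d t
  have hcont : ContinuousOn (fun t : ℝ => d * t ^ (d - 1)) (Set.uIcc a a') := by fun_prop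
  have := integral_deriv_smul_comp hderiv hcont (g := fun u => e (k * u)) (by fun_prop)
  simpa [h, Complex.real_smul, integral_e_intCast_mul_period] using this

theorem sum_sq_norm_integral_conj_mul_le {α ι : Type*} [MeasurableSpace α] {μ : Measure α}
    [IsFiniteMeasure μ] [DecidableEq ι] {φ : ι → α → ℂ} (hφ : ∀ i, MemLp (φ i) 2 μ)
    (horth : ∀ i j, ∫ x, conj (φ i x) * φ j x ∂μ = if i = j then 1 else 0)
    {f : α → ℂ} (hf : AEStronglyMeasurable f μ) {M : ℝ} (hM0 : 0 ≤ M)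
    (hM : ∀ᵐ x ∂μ, ‖f x‖ ≤ M) (s : Finset ι) :
    ∑ i ∈ s, ‖∫ x, conj (φ i x) * f x ∂μ‖ ^ 2 ≤ μ.real Set.univ * M ^ 2 := by
  have hfLp : MemLp f 2 μ := .of_bound hf M hM
  have inner_toLp : ∀ i {g : α → ℂ} (hg : MemLp g 2 μ),
      inner ℂ ((hφ i).toLp (φ i)) (hg.toLp g) = ∫ x, conj (φ i x) * g x ∂μ := by
    intro i g hg
    rw [L2.inner_def]
    refine integral_congr_ae ?_
    filter_upwards [(hφ i).coeFn_toLp, hg.coeFn_toLp] with x hφx hgx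
    rw [hφx, hgx, RCLike.inner_apply', mul_comm]
  have hortho : Orthonormal ℂ fun i => (hφ i).toLp (φ i) := by
    rw [orthonormal_iff_ite]
    intro i j
    rw [inner_toLp i (hφ j), horth]
  have hnorm : ‖hfLp.toLp f‖ ≤ √(μ.real Set.univ) * M := by
    refine (Lp.norm_le_of_ae_bound hM0 ?_).trans_eq ?_
    · filter_upwards [hfLp.coeFn_toLp, hM] with x hx hMx
      rwa [hx]
    · rw [Real.sqrt_eq_rpow, measureUnivNNReal, ENNReal.coe_toNNReal_eq_toReal, measureReal_def]
      norm_num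
  calc ∑ i ∈ s, ‖∫ x, conj (φ i x) * f x ∂μ‖ ^ 2
      = ∑ i ∈ s, ‖inner ℂ ((hφ i).toLp (φ i)) (hfLp.toLp f)‖ ^ 2 := by simp only [inner_toLp]
    _ ≤ ‖hfLp.toLp f‖ ^ 2 := hortho.sum_inner_products_le _
    _ ≤ (√(μ.real Set.univ) * M) ^ 2 := pow_le_pow_left₀ (norm_nonneg _) hnorm 2
    _ = μ.real Set.univ * M ^ 2 := by rw [mul_pow, Real.sq_sqrt measureReal_nonneg]

noncomputable def weightedPowChar (d : ℕ) (n : ℤ) (t : ℝ) : ℂ :=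
  (√(d * t ^ (d - 1)) : ℝ) * e (n * t ^ d)

section weightedPowChar

variable {d : ℕ}

lemma norm_weightedPowChar (n : ℤ) (t : ℝ) : ‖weightedPowChar d n t‖ = √(d * t ^ (d - 1)) := by
  rw [weightedPowChar, norm_mul, norm_e, mul_one, Complex.norm_real,
    Real.norm_of_nonneg (Real.sqrt_nonneg _)]

lemma conj_weightedPowChar_mul {t : ℝ} (ht : 0 ≤ t) (n m : ℤ) :
    conj (weightedPowChar d n t) * weightedPowChar d m t =
      ((d * t ^ (d - 1) : ℝ) : ℂ) * e ((m - n : ℤ) * t ^ d) := by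
  have hsq : √(d * t ^ (d - 1)) * √(d * t ^ (d - 1)) = d * t ^ (d - 1) :=
    Real.mul_self_sqrt (by positivity)
  rw [weightedPowChar, weightedPowChar, map_mul, Complex.conj_ofReal, conj_e,
    mul_mul_mul_comm, ← Complex.ofReal_mul, hsq, ← e_add]
  push_cast
  ring_nf

lemma memLp_weightedPowChar (n : ℤ) {a a' : ℝ} (ha : 0 ≤ a) :
    MemLp (weightedPowChar d n) 2 (volume.restrict (Set.Ioc a a')) := by
  refine .of_bound (by unfold weightedPowChar; fun_prop) √(d * a' ^ (d - 1)) ?_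
  refine (ae_restrict_iff' measurableSet_Ioc).2 (ae_of_all _ fun t ht => ?_)
  rw [norm_weightedPowChar]
  gcongr
  · linarith [ht.1]
  · exact ht.2

lemma integral_conj_weightedPowChar_mul {a a' : ℝ} (ha : 0 ≤ a) (haa' : a ≤ a')
    (h : a' ^ d = a ^ d + 1) (n m : ℤ) :
    ∫ t in Set.Ioc a a', conj (weightedPowChar d n t) * weightedPowChar d m t =
      if n = m then 1 else 0 := by
  rw [← integral_of_le haa', integral_congr fun t ht => conj_weightedPowChar_mul ?_ n m,
    integral_deriv_pow_mul_e_eq_ite _ h]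
  · simp only [sub_eq_zero, eq_comm]
  · rw [Set.uIcc_of_le haa'] at ht
    exact ha.trans ht.1

lemma setIntegral_conj_weightedPowChar_mul_indicator (hd : d ≠ 0) {a b a' : ℝ} (ha : 0 ≤ a)
    (hab : a ≤ b) (hba' : b ≤ a') (P : ℝ → ℝ) (n : ℤ) :
    ∫ t in Set.Ioc a a', conj (weightedPowChar d n t) *
        (Set.Ioc a b).indicator (fun t => e (-P t) / √(d * t ^ (d - 1))) t =
      ∫ t in a..b, e (-(P t + t ^ d * n)) := by
  have hpt : ∀ t ∈ Set.Ioc a a', conj (weightedPowChar d n t) *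
      (Set.Ioc a b).indicator (fun t => e (-P t) / √(d * t ^ (d - 1))) t =
      (Set.Ioc a b).indicator (fun t => e (-(P t + t ^ d * n))) t := by
    intro t _
    by_cases htb : t ∈ Set.Ioc a b
    · have hw : (√(d * t ^ (d - 1)) : ℂ) ≠ 0 := Complex.ofReal_ne_zero.2 <|
        Real.sqrt_ne_zero'.2 <| mul_pos (by positivity) (pow_pos (ha.trans_lt htb.1) _)
      rw [Set.indicator_of_mem htb, Set.indicator_of_mem htb, weightedPowChar, map_mul,
        Complex.conj_ofReal, conj_e, show -(P t + t ^ d * n) = -(n * t ^ d) + -P t by ring, e_add]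
      field_simp
    · simp only [Set.indicator_of_notMem htb, mul_zero]
  rw [setIntegral_congr_fun measurableSet_Ioc hpt, setIntegral_indicator measurableSet_Ioc,
    Set.inter_eq_self_of_subset_right (Set.Ioc_subset_Ioc_right hba'), integral_of_le hab]

end weightedPowChar

lemma exists_pow_eq_pow_add_one {d : ℕ} (hd : d ≠ 0) {a b : ℝ} (ha : 0 ≤ a) (hab : a ≤ b)
    (hb : b ^ d ≤ a ^ d + 1) : ∃ a', b ≤ a' ∧ a' - a ≤ 1 ∧ a' ^ d = a ^ d + 1 := by
  set a' : ℝ := (a ^ d + 1) ^ (d⁻¹ : ℝ)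
  have ha' : a' ^ d = a ^ d + 1 := Real.rpow_inv_natCast_pow (by positivity) hd
  have hba' : b ≤ a' := (pow_le_pow_iff_left₀ (ha.trans hab) (by positivity) hd).1 (ha' ▸ hb)
  refine ⟨a', hba', (pow_le_one_iff_of_nonneg (sub_nonneg.2 (hab.trans hba')) hd).1 ?_, ha'⟩
  have := pow_add_pow_le ha (sub_nonneg.2 (hab.trans hba')) hd
  rw [add_sub_cancel, ha'] at this
  linarith

theorem sum_sq_norm_integral_e_pow_le {d : ℕ} (hd : d ≠ 0) {a b : ℝ} (ha : 0 < a) (hab : a ≤ b)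
    (hb : b ^ d ≤ a ^ d + 1) {P : ℝ → ℝ} (hP : Continuous P) (S : Finset ℤ) :
    ∑ n ∈ S, ‖∫ t in a..b, e (-(P t + t ^ d * n))‖ ^ 2 ≤ (d * a ^ (d - 1))⁻¹ := by
  obtain ⟨a', hba', hlen, ha'⟩ := exists_pow_eq_pow_add_one hd ha.le hab hb
  have haa' : a ≤ a' := hab.trans hba'
  have hwa : 0 < √(d * a ^ (d - 1)) := by
    have : 0 < d := Nat.pos_of_ne_zero hd
    positivity
  set f : ℝ → ℂ := (Set.Ioc a b).indicator fun t => e (-P t) / √(d * t ^ (d - 1))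
  have hf : AEStronglyMeasurable f (volume.restrict (Set.Ioc a a')) :=
    (Measurable.indicator (by fun_prop) measurableSet_Ioc).aestronglyMeasurable
  have hfM : ∀ t, ‖f t‖ ≤ (√(d * a ^ (d - 1)))⁻¹ := by
    intro t
    by_cases ht : t ∈ Set.Ioc a b
    · simp only [f, Set.indicator_of_mem ht, norm_div, norm_e, Complex.norm_real, one_div]
      rw [Real.norm_of_nonneg (Real.sqrt_nonneg _)]
      refine inv_anti₀ hwa (Real.sqrt_le_sqrt ?_)
      exact mul_le_mul_of_nonneg_left (pow_le_pow_left₀ ha.le ht.1.le _) d.cast_nonneg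
    · simp only [f, Set.indicator_of_notMem ht, norm_zero]
      positivity
  have hBessel := sum_sq_norm_integral_conj_mul_le (fun n => memLp_weightedPowChar n ha.le)
    (integral_conj_weightedPowChar_mul ha.le haa' ha') hf (by positivity) (ae_of_all _ hfM) S
  simp only [f, setIntegral_conj_weightedPowChar_mul_indicator hd ha.le hab hba'] at hBessel
  refine hBessel.trans ?_
  rw [measureReal_restrict_apply_univ, Real.volume_real_Ioc_of_le haa', inv_pow,
    Real.sq_sqrt (by positivity)]
  exact mul_le_of_le_one_left (by positivity) hlen

theorem Fintype.sum_piFinset_eq_sum_sum_snoc {m : ℕ} {α M : Type*} [AddCommMonoid M]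
    (S : Fin (m + 1) → Finset α) (F : (Fin (m + 1) → α) → M) :
    ∑ ξ ∈ Fintype.piFinset S, F ξ =
      ∑ η ∈ Fintype.piFinset (Fin.init S), ∑ n ∈ S (Fin.last m), F (Fin.snoc η n) := by
  have := filter_piFinset_eq_map_snocEquiv S fun _ => True
  simp only [filter_true] at this
  rw [this, sum_map, sum_product_right]
  rfl

lemma Int.card_Icc_neg_natCast_natCast (x : ℕ) : #(Icc (-(x : ℤ)) x) = 2 * x + 1 := by
  simp only [Int.card_Icc]
  omega

lemma Fin.sum_val_add_one (m : ℕ) : ∑ i : Fin m, (i.1 + 1) = m * (m + 1) / 2 := by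
  have := sum_range_succ' (fun i => i) m
  rw [sum_range_id, add_zero, Nat.add_sub_cancel, mul_comm] at this
  rw [Fin.sum_univ_eq_sum_range (· + 1), ← this]

lemma card_piFinset_Icc_pow_le (K N m : ℕ) (hN : 1 ≤ N) :
    #(Fintype.piFinset fun i : Fin m =>
        Icc (-((K : ℤ) * (N : ℤ) ^ (i.1 + 1))) ((K : ℤ) * (N : ℤ) ^ (i.1 + 1))) ≤
      (2 * K + 1) ^ m * N ^ (m * (m + 1) / 2) := by
  rw [Fintype.card_piFinset, ← Fin.sum_val_add_one, ← prod_pow_eq_pow_sum, ← Fin.prod_const,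
    ← prod_mul_distrib]
  refine prod_le_prod' fun i _ => ?_
  have hcard := Int.card_Icc_neg_natCast_natCast (K * N ^ (i.1 + 1))
  push_cast at hcard
  rw [hcard]
  have : 1 ≤ N ^ (i.1 + 1) := Nat.one_le_pow _ _ hN
  nlinarith

theorem sum_sq_norm_integral_e_moment_snoc_le {m : ℕ} {a b : ℝ} (ha : 1 / 2 ≤ a) (hab : a ≤ b)
    (hb : b ≤ 1) (η : Fin m → ℤ) (S : Finset ℤ) :
    ∑ n ∈ S, ‖∫ t in a..b, e (-(∑ i : Fin (m + 1),
      t ^ (i.1 + 1) * (Fin.snoc (α := fun _ => ℤ) η n i : ℝ)))‖ ^ 2 ≤ 2 ^ m := by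
  simp only [Fin.sum_univ_castSucc, Fin.snoc_castSucc, Fin.snoc_last, Fin.val_castSucc,
    Fin.val_last]
  have hb' : b ^ (m + 1) ≤ a ^ (m + 1) + 1 := by
    nlinarith [pow_le_one₀ (by linarith : 0 ≤ b) hb (n := m + 1),
      pow_nonneg (by linarith : 0 ≤ a) (m + 1)]
  have hweight : (1 / 2 : ℝ) ^ m ≤ (m + 1 : ℕ) * a ^ m :=
    (pow_le_pow_left₀ (by norm_num) ha m).trans (le_mul_of_one_le_left (by positivity) (by simp))
  refine (sum_sq_norm_integral_e_pow_le (by omega) (by linarith) hab hb' (by fun_prop) S).trans ?_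
  simpa [one_div, inv_pow] using inv_anti₀ (by positivity) hweight

/-- Short-interval L² estimate for the moment curve measure over [a,b] ⊆ [1/2,1]. -/
theorem stmt_11 (d : ℕ) (hd : 2 ≤ d) :
    ∃ C : ℝ, 0 < C ∧ ∀ (a b : ℝ) (N : ℕ), 1 / 2 ≤ a → a ≤ b → b ≤ 1 →
      b - a ≤ 1 / (2 * d) → 1 ≤ N →
      ∑ ξ ∈ Fintype.piFinset (fun i : Fin d =>
          Finset.Icc (-(((d * (d + 1) / 2 : ℕ) : ℤ) * (N : ℤ) ^ (i.1 + 1)))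
            (((d * (d + 1) / 2 : ℕ) : ℤ) * (N : ℤ) ^ (i.1 + 1))),
        ‖∫ t in a..b, e (-(∑ i : Fin d, t ^ (i.1 + 1) * (ξ i : ℝ)))‖ ^ 2
      ≤ C * (N : ℝ) ^ (d * (d + 1) / 2 - d) := by
  obtain ⟨m, rfl⟩ : ∃ m, d = m + 1 := ⟨d - 1, by omega⟩
  set K := (m + 1) * (m + 1 + 1) / 2
  refine ⟨(2 * K + 1) ^ m * 2 ^ m, by positivity, fun a b N ha hab hb _ hN => ?_⟩
  have hexp : K - (m + 1) = m * (m + 1) / 2 := by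
    have : (m + 1) * (m + 1 + 1) = m * (m + 1) + 2 * (m + 1) := by ring
    simp only [K, this, Nat.add_mul_div_left _ _ two_pos]
    omega
  set S : Fin (m + 1) → Finset ℤ := fun i => Icc (-((K : ℤ) * N ^ (i.1 + 1))) (K * N ^ (i.1 + 1))
  rw [Fintype.sum_piFinset_eq_sum_sum_snoc]
  calc _ ≤ #(Fintype.piFinset (Fin.init S)) • (2 : ℝ) ^ m :=
        sum_le_card_nsmul _ _ _ fun η _ => sum_sq_norm_integral_e_moment_snoc_le ha hab hb η _
    _ ≤ ((2 * K + 1) ^ m * N ^ (m * (m + 1) / 2)) • (2 : ℝ) ^ m :=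
      nsmul_le_nsmul_left (by positivity) (card_piFinset_Icc_pow_le K N m hN)
    _ = _ := by
      rw [hexp, nsmul_eq_mul]
      push_cast
      ring
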